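/- Let D and D̃ be probability distributions on a space X, and for measurable c, f : X → [0,1] define R_D(c, f) = E_{x~D}|c(x) − f(x)|, and let R_D(c) = R_D(c, y) for a fixed labeling y. Fix a concept c* and set Λ = R_D̃(c*) + R_D(c*) and τ(c) = |R_D̃(c, c*) − R_D(c, c*)|. Then for all α ∈ [0,1] and all c, with R_α(c) = α·R_D(c) + (1 − α)·R_D̃(c), we have |R_α(c) − R_D(c)| ≤ (1 − α)(Λ + τ(c)). -/
import Mathlib


open MeasureTheory

/-- The disagreement error `R_D(c,f) = E_{x~D} |c(x) - f(x)|`. -/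
noncomputable def errR {X : Type*} [MeasurableSpace X] (D : Measure X)
    (c f : X → ℝ) : ℝ := ∫ x, |c x - f x| ∂D

lemma intAbsSub {X : Type*} [MeasurableSpace X] (D : Measure X)
    [IsProbabilityMeasure D] (c f : X → ℝ) (hc : Measurable c) (hf : Measurable f)
    (hc01 : ∀ x, c x ∈ Set.Icc (0 : ℝ) 1) (hf01 : ∀ x, f x ∈ Set.Icc (0 : ℝ) 1) :
    Integrable (fun x => |c x - f x|) D := by
  refine Integrable.mono' (integrable_const 1) ((hc.sub hf).abs).aestronglyMeasurable
    (Filter.Eventually.of_forall fun x => ?_)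
  have h1 := hc01 x; have h2 := hf01 x
  simp only [Set.mem_Icc] at h1 h2
  rw [Real.norm_eq_abs, abs_abs]
  rw [abs_sub_le_iff]; constructor <;> linarith

lemma errR_triangle {X : Type*} [MeasurableSpace X] (D : Measure X)
    [IsProbabilityMeasure D] (c f g : X → ℝ) (hc : Measurable c) (hf : Measurable f)
    (hg : Measurable g)
    (hc01 : ∀ x, c x ∈ Set.Icc (0 : ℝ) 1) (hf01 : ∀ x, f x ∈ Set.Icc (0 : ℝ) 1)
    (hg01 : ∀ x, g x ∈ Set.Icc (0 : ℝ) 1) :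
    |errR D c f - errR D c g| ≤ errR D g f := by
  have h1 := intAbsSub D c f hc hf hc01 hf01
  have h2 := intAbsSub D c g hc hg hc01 hg01
  unfold errR
  rw [← integral_sub h1 h2]
  calc |∫ x, (|c x - f x| - |c x - g x|) ∂D|
      ≤ ∫ x, |(|c x - f x| - |c x - g x|)| ∂D := by simpa [Real.norm_eq_abs] using norm_integral_le_integral_norm (fun x => |c x - f x| - |c x - g x|)
    _ ≤ ∫ x, |g x - f x| ∂D := by
        refine integral_mono_of_nonneg (Filter.Eventually.of_forall fun x => abs_nonneg _)
          (intAbsSub D g f hg hf hg01 hf01) (Filter.Eventually.of_forall fun x => ?_)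
        have := abs_sub_abs_le_abs_sub (c x - f x) (c x - g x)
        calc |(|c x - f x| - |c x - g x|)| ≤ |(c x - f x) - (c x - g x)| :=
              abs_abs_sub_abs_le_abs_sub _ _
          _ = |g x - f x| := by ring_nf

/-- `|R_α(c) - R_D(c)| ≤ (1 - α)(Λ + τ(c))` where
`Λ = R_D̃(c*) + R_D(c*)` and `τ(c) = |R_D̃(c, c*) - R_D(c, c*)|`. -/
theorem stmt11 {X : Type*} [MeasurableSpace X] (D Dt : Measure X)
    [IsProbabilityMeasure D] [IsProbabilityMeasure Dt]
    (y cstar : X → ℝ) (hy : Measurable y) (hy01 : ∀ x, y x ∈ Set.Icc (0 : ℝ) 1)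
    (hcstar : Measurable cstar) (hcstar01 : ∀ x, cstar x ∈ Set.Icc (0 : ℝ) 1)
    (α : ℝ) (hα : α ∈ Set.Icc (0 : ℝ) 1) (c : X → ℝ) (hc : Measurable c)
    (hc01 : ∀ x, c x ∈ Set.Icc (0 : ℝ) 1) :
    |(α * errR D c y + (1 - α) * errR Dt c y) - errR D c y|
      ≤ (1 - α) * ((errR Dt cstar y + errR D cstar y) +
          |errR Dt c cstar - errR D c cstar|) := by
  obtain ⟨hα0, hα1⟩ := hα
  have key : |errR Dt c y - errR D c y| ≤
      (errR Dt cstar y + errR D cstar y) + |errR Dt c cstar - errR D c cstar| := by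
    have h1 : |errR Dt c y - errR Dt c cstar| ≤ errR Dt cstar y :=
      errR_triangle Dt c y cstar hc hy hcstar hc01 hy01 hcstar01
    have h2 : |errR D c cstar - errR D c y| ≤ errR D cstar y :=
      abs_sub_comm (errR D c y) (errR D c cstar) ▸
        errR_triangle D c y cstar hc hy hcstar hc01 hy01 hcstar01
    calc |errR Dt c y - errR D c y|
        = |(errR Dt c y - errR Dt c cstar) + (errR Dt c cstar - errR D c cstar)
            + (errR D c cstar - errR D c y)| := by ring_nf
      _ ≤ |errR Dt c y - errR Dt c cstar| + |errR Dt c cstar - errR D c cstar|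
            + |errR D c cstar - errR D c y| := abs_add_three _ _ _
      _ ≤ _ := by linarith
  have heq : (α * errR D c y + (1 - α) * errR Dt c y) - errR D c y
      = (1 - α) * (errR Dt c y - errR D c y) := by ring
  rw [heq, abs_mul, abs_of_nonneg (by linarith)]
  exact mul_le_mul_of_nonneg_left key (by linarith)
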